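/- With L_dg as above, the homology of L_dg with respect to the differential ad(d) (i.e., ker(ad(d))/im(ad(d))) is isomorphic as a graded Lie superalgebra to the direct sum of the exterior current algebra sl2(∧) and a 1-dimensional abelian (trivial) Lie superalgebra. -/

import Mathlib

/-!
`ad d` vanishes on every basis vector of `L_dg` except `D`, which it sends to `-x`; so the cycles
are spanned by all basis vectors but `D`, and the boundaries are `K x`. The projection `π` that
kills `D` and `x`, sends `e, f, h, v₂, ṽ₀, v₋₂` to their namesakes in `sl2(∧)` and `d` to the
generator of the trivial summand has a linear section `ι` landing in the cycles, so `π` maps the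
cycles onto `sl2(∧) × K` with kernel `K x`. As `x` is central, the bracket of two cycles only sees
their `ι ∘ π`-parts; `d` brackets trivially with these, and on `e, …, v₋₂` the brackets of `L_dg`
agree with those of `sl2(∧)` except for the odd–odd ones, which are multiples of `x`.
-/

open Module Submodule

section Relations

variable {K M : Type*} [CommRing K] [AddCommGroup M] [Module K M]

-- An `sl2`-triple acting on `v₂, v₀, v₋₂` as on the adjoint representation, with a
-- super-antisymmetric bracket: the relations that `sl2(∧)` and `L_dg` have in common.
structure Sl2AdjRelations (B : M →ₗ[K] M →ₗ[K] M) (e f h v2 v0 vm2 : M) : Prop where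
  e_f : B e f = h
  h_e : B h e = (2 : K) • e
  h_f : B h f = -((2 : K) • f)
  e_v2 : B e v2 = 0
  e_v0 : B e v0 = -((2 : K) • v2)
  e_vm2 : B e vm2 = v0
  f_v2 : B f v2 = -v0
  f_v0 : B f v0 = (2 : K) • vm2
  f_vm2 : B f vm2 = 0
  h_v2 : B h v2 = (2 : K) • v2
  h_v0 : B h v0 = 0
  h_vm2 : B h vm2 = -((2 : K) • vm2)
  even_antisymm : ∀ a b, a ∈ span K ({e, f, h} : Set M) → b ∈ span K ({e, f, h} : Set M) →
    B a b = -(B b a)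
  odd_even_antisymm : ∀ a ∈ span K ({e, f, h} : Set M),
    ∀ b ∈ span K ({v2, v0, vm2} : Set M), B b a = -(B a b)

namespace Sl2AdjRelations

variable {B : M →ₗ[K] M →ₗ[K] M} {e f h v2 v0 vm2 : M}

lemma f_e (hR : Sl2AdjRelations B e f h v2 v0 vm2) : B f e = -h := by
  rw [hR.even_antisymm f e (subset_span (by simp)) (subset_span (by simp)), hR.e_f]

lemma e_h (hR : Sl2AdjRelations B e f h v2 v0 vm2) : B e h = -((2 : K) • e) := by
  rw [hR.even_antisymm e h (subset_span (by simp)) (subset_span (by simp)), hR.h_e]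

lemma f_h (hR : Sl2AdjRelations B e f h v2 v0 vm2) : B f h = (2 : K) • f := by
  rw [hR.even_antisymm f h (subset_span (by simp)) (subset_span (by simp)), hR.h_f, neg_neg]

lemma self_eq_zero [IsAddTorsionFree M] (hR : Sl2AdjRelations B e f h v2 v0 vm2) {a : M}
    (ha : a ∈ ({e, f, h} : Set M)) : B a a = 0 :=
  self_eq_neg.mp (hR.even_antisymm a a (subset_span ha) (subset_span ha))

lemma odd_even (hR : Sl2AdjRelations B e f h v2 v0 vm2) {a b : M}
    (ha : a ∈ ({e, f, h} : Set M)) (hb : b ∈ ({v2, v0, vm2} : Set M)) : B b a = -(B a b) :=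
  hR.odd_even_antisymm a (subset_span ha) b (subset_span hb)

end Sl2AdjRelations

structure Sl2DgRelations (B : M →ₗ[K] M →ₗ[K] M) (e f h v2 vm2 v0 d D x : M) : Prop where
  e_f : B e f = h
  h_e : B h e = (2 : K) • e
  h_f : B h f = -((2 : K) • f)
  e_v2 : B e v2 = 0
  f_vm2 : B f vm2 = 0
  h_v2 : B h v2 = (2 : K) • v2
  h_vm2 : B h vm2 = -((2 : K) • vm2)
  e_vm2 : B e vm2 = v0
  f_v2 : B f v2 = -v0
  d_e : B d e = 0
  d_f : B d f = 0
  d_h : B d h = 0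
  d_v2 : B d v2 = 0
  d_vm2 : B d vm2 = 0
  d_v0 : B d v0 = 0
  d_d : B d d = 0
  v2_v2 : B v2 v2 = 0
  vm2_vm2 : B vm2 vm2 = 0
  v2_vm2 : B v2 vm2 = x
  d_D : B d D = -x
  central : ∀ y, B x y = 0 ∧ B y x = 0
  e_v0 : B e v0 = -((2 : K) • v2)
  f_v0 : B f v0 = (2 : K) • vm2
  h_v0 : B h v0 = 0
  v0_v0 : B v0 v0 = (2 : K) • x
  v2_v0 : B v2 v0 = 0
  vm2_v0 : B vm2 v0 = 0
  even_antisymm : ∀ a b, a ∈ span K ({e, f, h, x} : Set M) →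
    b ∈ span K ({e, f, h, x} : Set M) → B a b = -(B b a)
  odd_even_antisymm : ∀ a ∈ span K ({e, f, h, x} : Set M),
    ∀ b ∈ span K ({v2, v0, vm2, d, D} : Set M), B b a = -(B a b)
  odd_symm : ∀ a ∈ span K ({v2, v0, vm2, d, D} : Set M),
    ∀ b ∈ span K ({v2, v0, vm2, d, D} : Set M), B a b = B b a

namespace Sl2DgRelations

variable {B : M →ₗ[K] M →ₗ[K] M} {e f h v2 vm2 v0 d D x : M}

lemma toSl2AdjRelations (hR : Sl2DgRelations B e f h v2 vm2 v0 d D x) :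
    Sl2AdjRelations B e f h v2 v0 vm2 := by
  have hev : span K ({e, f, h} : Set M) ≤ span K {e, f, h, x} :=
    span_mono (by simp [Set.insert_subset_iff])
  have hodd : span K ({v2, v0, vm2} : Set M) ≤ span K {v2, v0, vm2, d, D} :=
    span_mono (by simp [Set.insert_subset_iff])
  exact { hR with
    even_antisymm := fun a b ha hb => hR.even_antisymm a b (hev ha) (hev hb)
    odd_even_antisymm := fun a ha b hb => hR.odd_even_antisymm a (hev ha) b (hodd hb) }

lemma odd_swap (hR : Sl2DgRelations B e f h v2 vm2 v0 d D x) {a b : M}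
    (ha : a ∈ ({v2, v0, vm2, d, D} : Set M)) (hb : b ∈ ({v2, v0, vm2, d, D} : Set M)) :
    B a b = B b a :=
  hR.odd_symm a (subset_span ha) b (subset_span hb)

lemma v0_v2 (hR : Sl2DgRelations B e f h v2 vm2 v0 d D x) : B v0 v2 = 0 := by
  rw [hR.odd_swap (by simp) (by simp), hR.v2_v0]

lemma vm2_v2 (hR : Sl2DgRelations B e f h v2 vm2 v0 d D x) : B vm2 v2 = x := by
  rw [hR.odd_swap (by simp) (by simp), hR.v2_vm2]

lemma v0_vm2 (hR : Sl2DgRelations B e f h v2 vm2 v0 d D x) : B v0 vm2 = 0 := by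
  rw [hR.odd_swap (by simp) (by simp), hR.vm2_v0]

lemma bracket_d_eq_zero (hR : Sl2DgRelations B e f h v2 vm2 v0 d D x) {a : M}
    (ha : a ∈ ({e, f, h, v2, v0, vm2} : Set M)) : B a d = 0 := by
  have hd : d ∈ span K ({v2, v0, vm2, d, D} : Set M) := subset_span (by simp)
  rcases ha with rfl | rfl | rfl | rfl | rfl | rfl
  · simpa [hR.d_e] using hR.odd_even_antisymm a (subset_span (by simp)) d hd
  · simpa [hR.d_f] using hR.odd_even_antisymm a (subset_span (by simp)) d hd
  · simpa [hR.d_h] using hR.odd_even_antisymm a (subset_span (by simp)) d hd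
  · rw [hR.odd_swap (by simp) (by simp), hR.d_v2]
  · rw [hR.odd_swap (by simp) (by simp), hR.d_v0]
  · rw [hR.odd_swap (by simp) (by simp), hR.d_vm2]

end Sl2DgRelations

end Relations

section Homology

variable {K L L' : Type*} [Field K] [AddCommGroup L] [Module K L] [AddCommGroup L'] [Module K L']
  {B : L →ₗ[K] L →ₗ[K] L} {e f h v2 vm2 v0 d D x : L} {b : Basis (Fin 9) K L}
  {B' : L' →ₗ[K] L' →ₗ[K] L'} {e' f' h' w2 w0 wm2 : L'} {b' : Basis (Fin 6) K L'}

-- `b` lists `e, f, h, v₂, v₋₂, ṽ₀, d, D, x`, whereas `sl2(∧)` is listed as `e, f, h, v₂, v₀, v₋₂`.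
noncomputable def homologyProj (b : Basis (Fin 9) K L) (e' f' h' w2 w0 wm2 : L') :
    L →ₗ[K] L' × K :=
  b.constr K ![(e', 0), (f', 0), (h', 0), (w2, 0), (wm2, 0), (w0, 0), (0, 1), 0, 0]

noncomputable def homologyLift (b' : Basis (Fin 6) K L') (e f h v2 v0 vm2 d : L) :
    L' × K →ₗ[K] L :=
  (b'.constr K ![e, f, h, v2, v0, vm2]).coprod (LinearMap.toSpanSingleton K L d)

lemma homologyProj_values (e' f' h' w2 w0 wm2 : L')
    (hb : ⇑b = ![e, f, h, v2, vm2, v0, d, D, x]) :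
    let π := homologyProj b e' f' h' w2 w0 wm2
    π e = (e', 0) ∧ π f = (f', 0) ∧ π h = (h', 0) ∧ π v2 = (w2, 0) ∧ π vm2 = (wm2, 0) ∧
      π v0 = (w0, 0) ∧ π d = (0, 1) ∧ π D = 0 ∧ π x = 0 := by
  have := b.constr_basis K
    ![((e' : L'), (0 : K)), (f', 0), (h', 0), (w2, 0), (wm2, 0), (w0, 0), (0, 1), 0, 0]
  rw [hb] at this
  exact ⟨this 0, this 1, this 2, this 3, this 4, this 5, this 6, this 7, this 8⟩

lemma homologyLift_values (e f h v2 v0 vm2 d : L) (hb' : ⇑b' = ![e', f', h', w2, w0, wm2]) :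
    let ι := homologyLift b' e f h v2 v0 vm2 d
    ι (e', 0) = e ∧ ι (f', 0) = f ∧ ι (h', 0) = h ∧ ι (w2, 0) = v2 ∧ ι (w0, 0) = v0 ∧
      ι (wm2, 0) = vm2 ∧ ι (0, 1) = d := by
  have := b'.constr_basis K ![e, f, h, v2, v0, vm2]
  rw [hb'] at this
  simp only [homologyLift, LinearMap.coprod_apply, map_zero, LinearMap.toSpanSingleton_apply,
    add_zero, one_smul, zero_add]
  exact ⟨this 0, this 1, this 2, this 3, this 4, this 5, trivial⟩

local notation "π" => homologyProj b e' f' h' w2 w0 wm2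
local notation "ι" => homologyLift b' e f h v2 v0 vm2 d

lemma homologyProj_homologyLift (hb : ⇑b = ![e, f, h, v2, vm2, v0, d, D, x])
    (hb' : ⇑b' = ![e', f', h', w2, w0, wm2]) (y : L' × K) : π (ι y) = y := by
  obtain ⟨πe, πf, πh, πv2, πvm2, πv0, πd, -, -⟩ := homologyProj_values e' f' h' w2 w0 wm2 hb
  obtain ⟨ιe, ιf, ιh, ιw2, ιw0, ιwm2, ιd⟩ := homologyLift_values e f h v2 v0 vm2 d hb'
  suffices hid : π ∘ₗ ι = LinearMap.id from LinearMap.congr_fun hid y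
  refine LinearMap.prod_ext (b'.ext fun i => ?_) (LinearMap.ext_ring ?_)
  · fin_cases i <;> simp [hb', ιe, ιf, ιh, ιw2, ιw0, ιwm2, πe, πf, πh, πv2, πvm2, πv0]
  · simp [ιd, πd]

lemma homologyLift_homologyProj_add (hb : ⇑b = ![e, f, h, v2, vm2, v0, d, D, x])
    (hb' : ⇑b' = ![e', f', h', w2, w0, wm2]) (a : L) :
    ι (π a) + b.coord 7 a • D + b.coord 8 a • x = a := by
  obtain ⟨ιe, ιf, ιh, ιw2, ιw0, ιwm2, ιd⟩ := homologyLift_values e f h v2 v0 vm2 d hb'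
  suffices hid : ι ∘ₗ π + (b.coord 7).smulRight D + (b.coord 8).smulRight x = LinearMap.id from
    LinearMap.congr_fun hid a
  refine b.ext fun i => ?_
  fin_cases i <;> simp [homologyProj, Basis.coord_apply] <;>
    simp [hb, ιe, ιf, ιh, ιw2, ιw0, ιwm2, ιd]

namespace Sl2DgRelations

lemma ad_d_eq (hR : Sl2DgRelations B e f h v2 vm2 v0 d D x)
    (hb : ⇑b = ![e, f, h, v2, vm2, v0, d, D, x]) : B d = -(b.coord 7).smulRight x := by
  refine b.ext fun i => ?_
  fin_cases i <;> simp [Basis.coord_apply] <;>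
    simp [hb, hR.d_e, hR.d_f, hR.d_h, hR.d_v2, hR.d_vm2, hR.d_v0, hR.d_d, hR.d_D, (hR.central _).2]

lemma mem_ker_ad_d_iff (hR : Sl2DgRelations B e f h v2 vm2 v0 d D x)
    (hb : ⇑b = ![e, f, h, v2, vm2, v0, d, D, x]) {a : L} :
    a ∈ LinearMap.ker (B d) ↔ b.coord 7 a = 0 := by
  have hx : x ≠ 0 := by simpa [hb] using b.ne_zero 8
  simp [hR.ad_d_eq hb, hx]

lemma range_ad_d (hR : Sl2DgRelations B e f h v2 vm2 v0 d D x)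
    (hb : ⇑b = ![e, f, h, v2, vm2, v0, d, D, x]) : LinearMap.range (B d) = K ∙ x := by
  have hcoord : b.coord 7 ≠ 0 := fun h0 => by simpa using LinearMap.congr_fun h0 (b 7)
  rw [hR.ad_d_eq hb, LinearMap.range_neg, LinearMap.range_smulRight_apply hcoord]

lemma homologyLift_mem_ker (hR : Sl2DgRelations B e f h v2 vm2 v0 d D x)
    (hb' : ⇑b' = ![e', f', h', w2, w0, wm2]) (y : L' × K) : ι y ∈ LinearMap.ker (B d) := by
  obtain ⟨ιe, ιf, ιh, ιw2, ιw0, ιwm2, ιd⟩ := homologyLift_values e f h v2 v0 vm2 d hb'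
  suffices h0 : B d ∘ₗ ι = 0 from LinearMap.congr_fun h0 y
  refine LinearMap.prod_ext (b'.ext fun i => ?_) (LinearMap.ext_ring ?_)
  · fin_cases i <;> simp [hb', ιe, ιf, ιh, ιw2, ιw0, ιwm2, hR.d_e, hR.d_f, hR.d_h, hR.d_v2,
      hR.d_v0, hR.d_vm2]
  · simp [ιd, hR.d_d]

lemma homologyLift_bracket_d (hR : Sl2DgRelations B e f h v2 vm2 v0 d D x)
    (hb' : ⇑b' = ![e', f', h', w2, w0, wm2]) (u : L') : B (ι (u, 0)) d = 0 := by
  obtain ⟨ιe, ιf, ιh, ιw2, ιw0, ιwm2, -⟩ := homologyLift_values e f h v2 v0 vm2 d hb'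
  suffices h0 : B.flip d ∘ₗ ι ∘ₗ LinearMap.inl K L' K = 0 from LinearMap.congr_fun h0 u
  refine b'.ext fun i => ?_
  fin_cases i <;> simp [hb', ιe, ιf, ιh, ιw2, ιw0, ιwm2] <;> exact hR.bracket_d_eq_zero (by simp)

lemma bracket_homologyLift (hR : Sl2DgRelations B e f h v2 vm2 v0 d D x)
    (hb' : ⇑b' = ![e', f', h', w2, w0, wm2]) (p q : L' × K) :
    B (ι p) (ι q) = B (ι (p.1, 0)) (ι (q.1, 0)) := by
  have hsplit (r : L' × K) : ι r = ι (r.1, 0) + r.2 • d := by simp [homologyLift]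
  have hdι := hR.homologyLift_mem_ker hb' (q.1, 0)
  rw [LinearMap.mem_ker] at hdι
  rw [hsplit p, hsplit q]
  simp [hR.homologyLift_bracket_d hb', hdι, hR.d_d]

lemma homologyProj_bracket_homologyLift [IsAddTorsionFree L] [IsAddTorsionFree L']
    (hR : Sl2DgRelations B e f h v2 vm2 v0 d D x) (hR' : Sl2AdjRelations B' e' f' h' w2 w0 wm2)
    (hodd : ∀ a ∈ span K ({w2, w0, wm2} : Set L'), ∀ b ∈ span K ({w2, w0, wm2} : Set L'),
      B' a b = 0)
    (hb : ⇑b = ![e, f, h, v2, vm2, v0, d, D, x]) (hb' : ⇑b' = ![e', f', h', w2, w0, wm2])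
    (u w : L') : π (B (ι (u, 0)) (ι (w, 0))) = (B' u w, 0) := by
  obtain ⟨πe, πf, πh, πv2, πvm2, πv0, -, -, πx⟩ := homologyProj_values e' f' h' w2 w0 wm2 hb
  obtain ⟨ιe, ιf, ιh, ιw2, ιw0, ιwm2, -⟩ := homologyLift_values e f h v2 v0 vm2 d hb'
  have hodd' {a c : L'} (ha : a ∈ ({w2, w0, wm2} : Set L')) (hc : c ∈ ({w2, w0, wm2} : Set L')) :
      B' a c = 0 := hodd a (subset_span ha) c (subset_span hc)
  have hL := hR.toSl2AdjRelations
  let ι₀ := ι ∘ₗ LinearMap.inl K L' K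
  suffices hB : (B.compl₁₂ ι₀ ι₀).compr₂ π = B'.compr₂ (LinearMap.inl K L' K) from
    LinearMap.congr_fun₂ hB u w
  refine LinearMap.ext_basis b' b' fun i j => ?_
  -- the odd–odd brackets in `L` are multiples of `x`, which `π` kills
  fin_cases i <;> fin_cases j <;>
    simp [ι₀, hb', ιe, ιf, ιh, ιw2, ιw0, ιwm2, πe, πf, πh, πv2, πvm2, πv0, πx,
      hL.e_f, hL.h_e, hL.h_f, hL.e_v2, hL.e_v0, hL.e_vm2, hL.f_v2, hL.f_v0, hL.f_vm2, hL.h_v2,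
      hL.h_v0, hL.h_vm2, hL.f_e, hL.e_h, hL.f_h, hL.self_eq_zero, hL.odd_even,
      hR.v2_v2, hR.v2_v0, hR.v2_vm2, hR.v0_v0, hR.vm2_v0, hR.vm2_vm2,
      hR.v0_v2, hR.vm2_v2, hR.v0_vm2,
      hR'.e_f, hR'.h_e, hR'.h_f, hR'.e_v2, hR'.e_v0, hR'.e_vm2, hR'.f_v2, hR'.f_v0, hR'.f_vm2,
      hR'.h_v2, hR'.h_v0, hR'.h_vm2, hR'.f_e, hR'.e_h, hR'.f_h, hR'.self_eq_zero, hR'.odd_even,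
      hodd', Prod.mk_zero_zero]

lemma exists_mem_ker_homologyProj_eq (hR : Sl2DgRelations B e f h v2 vm2 v0 d D x)
    (hb : ⇑b = ![e, f, h, v2, vm2, v0, d, D, x]) (hb' : ⇑b' = ![e', f', h', w2, w0, wm2])
    (y : L' × K) : ∃ a ∈ LinearMap.ker (B d), π a = y :=
  ⟨ι y, hR.homologyLift_mem_ker hb' y, homologyProj_homologyLift hb hb' y⟩

lemma homologyProj_eq_zero_iff (hR : Sl2DgRelations B e f h v2 vm2 v0 d D x)
    (hb : ⇑b = ![e, f, h, v2, vm2, v0, d, D, x]) (hb' : ⇑b' = ![e', f', h', w2, w0, wm2])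
    {a : L} (ha : a ∈ LinearMap.ker (B d)) : π a = 0 ↔ a ∈ LinearMap.range (B d) := by
  obtain ⟨-, -, -, -, -, -, -, -, πx⟩ := homologyProj_values e' f' h' w2 w0 wm2 hb
  rw [hR.range_ad_d hb, mem_span_singleton]
  constructor
  · intro h0
    have hdecomp := homologyLift_homologyProj_add hb hb' a
    rw [h0, map_zero, zero_add, (hR.mem_ker_ad_d_iff hb).mp ha, zero_smul, zero_add] at hdecomp
    exact ⟨_, hdecomp⟩
  · rintro ⟨c, rfl⟩
    rw [map_smul, πx, smul_zero]

lemma homologyProj_bracket [IsAddTorsionFree L] [IsAddTorsionFree L']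
    (hR : Sl2DgRelations B e f h v2 vm2 v0 d D x) (hR' : Sl2AdjRelations B' e' f' h' w2 w0 wm2)
    (hodd : ∀ a ∈ span K ({w2, w0, wm2} : Set L'), ∀ b ∈ span K ({w2, w0, wm2} : Set L'),
      B' a b = 0)
    (hb : ⇑b = ![e, f, h, v2, vm2, v0, d, D, x]) (hb' : ⇑b' = ![e', f', h', w2, w0, wm2])
    {a c : L} (ha : a ∈ LinearMap.ker (B d)) (hc : c ∈ LinearMap.ker (B d)) :
    π (B a c) = (B' (π a).1 (π c).1, 0) := by
  have hsplit {y : L} (hy : y ∈ LinearMap.ker (B d)) : y = ι (π y) + b.coord 8 y • x := by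
    conv_lhs => rw [← homologyLift_homologyProj_add hb hb' y]
    rw [(hR.mem_ker_ad_d_iff hb).mp hy, zero_smul, add_zero]
  calc π (B a c) = π (B (ι (π a)) (ι (π c))) := by
        conv_lhs => rw [hsplit ha, hsplit hc]
        simp [(hR.central _).1, (hR.central _).2]
    _ = (B' (π a).1 (π c).1, 0) := by
        rw [hR.bracket_homologyLift hb',
          hR.homologyProj_bracket_homologyLift hR' hodd hb hb']

end Sl2DgRelations

lemma homologyProj_mem_even (hb : ⇑b = ![e, f, h, v2, vm2, v0, d, D, x]) {a : L}
    (ha : a ∈ span K ({e, f, h, x} : Set L)) :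
    (π a).1 ∈ span K ({e', f', h'} : Set L') ∧ (π a).2 = 0 := by
  obtain ⟨πe, πf, πh, -, -, -, -, -, πx⟩ := homologyProj_values e' f' h' w2 w0 wm2 hb
  have hle : span K ({e, f, h, x} : Set L) ≤ ((span K ({e', f', h'} : Set L')).prod ⊥).comap π := by
    rw [span_le]
    rintro y (rfl | rfl | rfl | rfl) <;> simp [πe, πf, πh, πx] <;>
      exact subset_span (by simp)
  simpa using hle ha

lemma homologyProj_mem_odd (hb : ⇑b = ![e, f, h, v2, vm2, v0, d, D, x]) {a : L}
    (ha : a ∈ span K ({v2, v0, vm2, d, D} : Set L)) :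
    (π a).1 ∈ span K ({w2, w0, wm2} : Set L') := by
  obtain ⟨-, -, -, πv2, πvm2, πv0, πd, πD, -⟩ := homologyProj_values e' f' h' w2 w0 wm2 hb
  have hle : span K ({v2, v0, vm2, d, D} : Set L) ≤
      ((span K ({w2, w0, wm2} : Set L')).prod ⊤).comap π := by
    rw [span_le]
    rintro y (rfl | rfl | rfl | rfl | rfl) <;> simp [πv2, πvm2, πv0, πd, πD] <;>
      exact subset_span (by simp)
  simpa using hle ha

end Homology

theorem stmt_6_general (L : Type*) [AddCommGroup L] [Module ℂ L]
    (B : L →ₗ[ℂ] L →ₗ[ℂ] L)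
    (e f h v2 vm2 v0 d D x : L)
    (hbasis : LinearIndependent ℂ ![e, f, h, v2, vm2, v0, d, D, x])
    (hspan : Submodule.span ℂ (Set.range ![e, f, h, v2, vm2, v0, d, D, x]) = ⊤)
    -- sl2 relations
    (h1 : B e f = h) (h2 : B h e = (2 : ℂ) • e) (h3 : B h f = -((2 : ℂ) • f))
    (h4 : B e v2 = 0) (h5 : B f vm2 = 0)
    (h6 : B h v2 = (2 : ℂ) • v2) (h7 : B h vm2 = -((2 : ℂ) • vm2))
    (h8 : B e vm2 = v0) (h9 : B f v2 = -v0)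
    -- `d` and `D` super-commute with `e, f, h, v₂, v₋₂` (and hence with `ṽ₀`)
    (hd1 : B d e = 0) (hd2 : B d f = 0) (hd3 : B d h = 0)
    (hd4 : B d v2 = 0) (hd5 : B d vm2 = 0) (hd6 : B d v0 = 0)
    (hdd : B d d = 0)
    (hv2v2 : B v2 v2 = 0) (hvm2vm2 : B vm2 vm2 = 0)
    (hx1 : B v2 vm2 = x) (hx2 : B d D = -x)
    (hcentral : ∀ y : L, B x y = 0 ∧ B y x = 0)
    -- derived brackets with `ṽ₀ = [e,v₋₂]`
    (g1 : B e v0 = -((2 : ℂ) • v2)) (g2 : B f v0 = (2 : ℂ) • vm2) (g3 : B h v0 = 0)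
    (g4 : B v0 v0 = (2 : ℂ) • x) (g5 : B v2 v0 = 0) (g6 : B vm2 v0 = 0)
    -- super-(anti)symmetry of the bracket on even/odd parts
    (gA1 : ∀ a b : L, a ∈ Submodule.span ℂ ({e, f, h, x} : Set L) →
      b ∈ Submodule.span ℂ ({e, f, h, x} : Set L) → B a b = -(B b a))
    (gA2 : ∀ a ∈ Submodule.span ℂ ({e, f, h, x} : Set L),
      ∀ b ∈ Submodule.span ℂ ({v2, v0, vm2, d, D} : Set L), B b a = -(B a b))
    (gA3 : ∀ a ∈ Submodule.span ℂ ({v2, v0, vm2, d, D} : Set L),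
      ∀ b ∈ Submodule.span ℂ ({v2, v0, vm2, d, D} : Set L), B a b = B b a)
    -- a model `L'` of the exterior current algebra sl2(∧)
    (L' : Type*) [AddCommGroup L'] [Module ℂ L']
    (B' : L' →ₗ[ℂ] L' →ₗ[ℂ] L')
    (e' f' h' w2 w0 wm2 : L')
    (hbasis' : LinearIndependent ℂ ![e', f', h', w2, w0, wm2])
    (hspan' : Submodule.span ℂ (Set.range ![e', f', h', w2, w0, wm2]) = ⊤)
    (k1 : B' e' f' = h') (k2 : B' h' e' = (2 : ℂ) • e') (k3 : B' h' f' = -((2 : ℂ) • f'))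
    (k4 : B' e' w2 = 0) (k5 : B' e' w0 = -((2 : ℂ) • w2)) (k6 : B' e' wm2 = w0)
    (k7 : B' f' w2 = -w0) (k8 : B' f' w0 = (2 : ℂ) • wm2) (k9 : B' f' wm2 = 0)
    (k10 : B' h' w2 = (2 : ℂ) • w2) (k11 : B' h' w0 = 0) (k12 : B' h' wm2 = -((2 : ℂ) • wm2))
    (k13 : ∀ a ∈ Submodule.span ℂ ({w2, w0, wm2} : Set L'),
      ∀ b ∈ Submodule.span ℂ ({w2, w0, wm2} : Set L'), B' a b = 0)
    (kA1 : ∀ a b : L', a ∈ Submodule.span ℂ ({e', f', h'} : Set L') →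
      b ∈ Submodule.span ℂ ({e', f', h'} : Set L') → B' a b = -(B' b a))
    (kA2 : ∀ a ∈ Submodule.span ℂ ({e', f', h'} : Set L'),
      ∀ b ∈ Submodule.span ℂ ({w2, w0, wm2} : Set L'), B' b a = -(B' a b)) :
    ∃ π : L →ₗ[ℂ] (L' × ℂ),
      (∀ y : L' × ℂ, ∃ a ∈ LinearMap.ker (B d), π a = y) ∧
      (∀ a ∈ LinearMap.ker (B d), (π a = 0 ↔ a ∈ LinearMap.range (B d))) ∧
      (∀ a ∈ LinearMap.ker (B d), ∀ b ∈ LinearMap.ker (B d),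
        π (B a b) = (B' (π a).1 (π b).1, 0)) ∧
      (∀ a ∈ Submodule.span ℂ ({e, f, h, x} : Set L),
        (π a).1 ∈ Submodule.span ℂ ({e', f', h'} : Set L') ∧ (π a).2 = 0) ∧
      (∀ a ∈ Submodule.span ℂ ({v2, v0, vm2, d, D} : Set L),
        (π a).1 ∈ Submodule.span ℂ ({w2, w0, wm2} : Set L')) := by
  have : IsAddTorsionFree L := .of_isTorsionFree ℂ L
  have : IsAddTorsionFree L' := .of_isTorsionFree ℂ L'
  obtain ⟨b, hb⟩ : ∃ b : Basis (Fin 9) ℂ L, ⇑b = ![e, f, h, v2, vm2, v0, d, D, x] :=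
    ⟨.mk hbasis hspan.ge, Basis.coe_mk _ _⟩
  obtain ⟨b', hb'⟩ : ∃ b' : Basis (Fin 6) ℂ L', ⇑b' = ![e', f', h', w2, w0, wm2] :=
    ⟨.mk hbasis' hspan'.ge, Basis.coe_mk _ _⟩
  have hR : Sl2DgRelations B e f h v2 vm2 v0 d D x :=
    ⟨h1, h2, h3, h4, h5, h6, h7, h8, h9, hd1, hd2, hd3, hd4, hd5, hd6, hdd, hv2v2, hvm2vm2, hx1,
      hx2, hcentral, g1, g2, g3, g4, g5, g6, gA1, gA2, gA3⟩
  have hR' : Sl2AdjRelations B' e' f' h' w2 w0 wm2 :=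
    ⟨k1, k2, k3, k4, k5, k6, k7, k8, k9, k10, k11, k12, kA1, kA2⟩
  exact ⟨homologyProj b e' f' h' w2 w0 wm2, hR.exists_mem_ker_homologyProj_eq hb hb',
    fun a ha => hR.homologyProj_eq_zero_iff hb hb' ha,
    fun a ha c hc => hR.homologyProj_bracket hR' k13 hb hb' ha hc,
    fun a ha => homologyProj_mem_even hb ha, fun a ha => homologyProj_mem_odd hb ha⟩

/-- Let `L = sl2(∧)_dg` be the 9-dimensional graded Lie superalgebra with
basis `{e, f, h, v₂, v₋₂, ṽ₀, d, D, x}` (written `e f h v2 vm2 v0 d D x`) and super-bracket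
`B` with the relations listed in the paper (we record the full bracket table needed:
the listed relations, the derived brackets with `ṽ₀`, and the super-(anti)symmetry of `B`
on the even part `span{e,f,h,x}` and odd part `span{v₂,ṽ₀,v₋₂,d,D}`).
Let `L'` be the exterior current algebra `sl2(∧)`, with even basis `{e', f', h'}`
(written `e' f' h'`), odd basis `{v₂, v₀, v₋₂}` (written `w2 w0 wm2`), and bracket `B'`.
Then the homology of `L` with respect to `ad d` is isomorphic, as a graded Lie
superalgebra, to `sl2(∧) ⊕ ℂ` (with `ℂ` a trivial 1-dimensional summand): there is a
linear map `π : L → L' × ℂ` which, restricted to `ker(ad d)`, is surjective with kernel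
`im(ad d)`, intertwines the brackets (the bracket on `L' × ℂ` being `B'` on the first
factor and zero on the trivial factor), and respects the ℤ/2-grading. -/
theorem stmt_6 (L : Type*) [AddCommGroup L] [Module ℂ L]
    (B : L →ₗ[ℂ] L →ₗ[ℂ] L)
    (e f h v2 vm2 v0 d D x : L)
    (hbasis : LinearIndependent ℂ ![e, f, h, v2, vm2, v0, d, D, x])
    (hspan : Submodule.span ℂ (Set.range ![e, f, h, v2, vm2, v0, d, D, x]) = ⊤)
    -- sl2 relations
    (h1 : B e f = h) (h2 : B h e = (2 : ℂ) • e) (h3 : B h f = -((2 : ℂ) • f))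
    (h4 : B e v2 = 0) (h5 : B f vm2 = 0)
    (h6 : B h v2 = (2 : ℂ) • v2) (h7 : B h vm2 = -((2 : ℂ) • vm2))
    (h8 : B e vm2 = v0) (h9 : B f v2 = -v0)
    -- `d` and `D` super-commute with `e, f, h, v₂, v₋₂` (and hence with `ṽ₀`)
    (hd1 : B d e = 0) (hd2 : B d f = 0) (hd3 : B d h = 0)
    (hd4 : B d v2 = 0) (hd5 : B d vm2 = 0) (hd6 : B d v0 = 0)
    (hD1 : B D e = 0) (hD2 : B D f = 0) (hD3 : B D h = 0)
    (hD4 : B D v2 = 0) (hD5 : B D vm2 = 0)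
    (hdd : B d d = 0) (hDD : B D D = 0)
    (hv2v2 : B v2 v2 = 0) (hvm2vm2 : B vm2 vm2 = 0)
    (hx1 : B v2 vm2 = x) (hx2 : B d D = -x)
    (hcentral : ∀ y : L, B x y = 0 ∧ B y x = 0)
    -- derived brackets with `ṽ₀ = [e,v₋₂]`
    (g1 : B e v0 = -((2 : ℂ) • v2)) (g2 : B f v0 = (2 : ℂ) • vm2) (g3 : B h v0 = 0)
    (g4 : B v0 v0 = (2 : ℂ) • x) (g5 : B v2 v0 = 0) (g6 : B vm2 v0 = 0)
    -- super-(anti)symmetry of the bracket on even/odd parts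
    (gA1 : ∀ a b : L, a ∈ Submodule.span ℂ ({e, f, h, x} : Set L) →
      b ∈ Submodule.span ℂ ({e, f, h, x} : Set L) → B a b = -(B b a))
    (gA2 : ∀ a ∈ Submodule.span ℂ ({e, f, h, x} : Set L),
      ∀ b ∈ Submodule.span ℂ ({v2, v0, vm2, d, D} : Set L), B b a = -(B a b))
    (gA3 : ∀ a ∈ Submodule.span ℂ ({v2, v0, vm2, d, D} : Set L),
      ∀ b ∈ Submodule.span ℂ ({v2, v0, vm2, d, D} : Set L), B a b = B b a)
    -- a model `L'` of the exterior current algebra sl2(∧)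
    (L' : Type*) [AddCommGroup L'] [Module ℂ L']
    (B' : L' →ₗ[ℂ] L' →ₗ[ℂ] L')
    (e' f' h' w2 w0 wm2 : L')
    (hbasis' : LinearIndependent ℂ ![e', f', h', w2, w0, wm2])
    (hspan' : Submodule.span ℂ (Set.range ![e', f', h', w2, w0, wm2]) = ⊤)
    (k1 : B' e' f' = h') (k2 : B' h' e' = (2 : ℂ) • e') (k3 : B' h' f' = -((2 : ℂ) • f'))
    (k4 : B' e' w2 = 0) (k5 : B' e' w0 = -((2 : ℂ) • w2)) (k6 : B' e' wm2 = w0)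
    (k7 : B' f' w2 = -w0) (k8 : B' f' w0 = (2 : ℂ) • wm2) (k9 : B' f' wm2 = 0)
    (k10 : B' h' w2 = (2 : ℂ) • w2) (k11 : B' h' w0 = 0) (k12 : B' h' wm2 = -((2 : ℂ) • wm2))
    (k13 : ∀ a ∈ Submodule.span ℂ ({w2, w0, wm2} : Set L'),
      ∀ b ∈ Submodule.span ℂ ({w2, w0, wm2} : Set L'), B' a b = 0)
    (kA1 : ∀ a b : L', a ∈ Submodule.span ℂ ({e', f', h'} : Set L') →
      b ∈ Submodule.span ℂ ({e', f', h'} : Set L') → B' a b = -(B' b a))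
    (kA2 : ∀ a ∈ Submodule.span ℂ ({e', f', h'} : Set L'),
      ∀ b ∈ Submodule.span ℂ ({w2, w0, wm2} : Set L'), B' b a = -(B' a b)) :
    ∃ π : L →ₗ[ℂ] (L' × ℂ),
      (∀ y : L' × ℂ, ∃ a ∈ LinearMap.ker (B d), π a = y) ∧
      (∀ a ∈ LinearMap.ker (B d), (π a = 0 ↔ a ∈ LinearMap.range (B d))) ∧
      (∀ a ∈ LinearMap.ker (B d), ∀ b ∈ LinearMap.ker (B d),
        π (B a b) = (B' (π a).1 (π b).1, 0)) ∧
      (∀ a ∈ Submodule.span ℂ ({e, f, h, x} : Set L),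
        (π a).1 ∈ Submodule.span ℂ ({e', f', h'} : Set L') ∧ (π a).2 = 0) ∧
      (∀ a ∈ Submodule.span ℂ ({v2, v0, vm2, d, D} : Set L),
        (π a).1 ∈ Submodule.span ℂ ({w2, w0, wm2} : Set L')) :=
  stmt_6_general L B e f h v2 vm2 v0 d D x hbasis hspan h1 h2 h3 h4 h5 h6 h7 h8 h9 hd1 hd2 hd3 hd4
    hd5 hd6 hdd hv2v2 hvm2vm2 hx1 hx2 hcentral g1 g2 g3 g4 g5 g6 gA1 gA2 gA3 L' B' e' f' h' w2 w0
    wm2 hbasis' hspan' k1 k2 k3 k4 k5 k6 k7 k8 k9 k10 k11 k12 k13 kA1 kA2
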